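/- arXiv:1706.01936 — 7 statements merged into one kernel-verified Lean document; each statement's English description precedes it below -/
import Mathlib

section
/- Let μ > 0, θ ∈ (0,1), C > 0, D > 0 and t_s > t_e > 0 be real constants. Define U(λ) = μ(1−θ)·[log₂(1 + (λC − 2D)·t_s) − log₂(1 + (λC − 2D)·t_e)] − θ·λ²·C + 2θ·λ·D on the interval I = {λ ∈ ℝ : 1 + (λC − 2D)·t_s > 0 and 1 + (λC − 2D)·t_e > 0}. Then I is an interval and U is strictly concave on I. -/
/-!
With `x = λC − 2D`, the logarithmic part of `U` is a nonnegative multiple of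
`g(x) = log(1 + x tₛ) − log(1 + x tₑ)`, whose derivative `(tₛ − tₑ) / ((1 + x tₛ)(1 + x tₑ))`
is nonincreasing since both factors of the denominator are positive and nondecreasing. So `g` is
concave, it stays concave under the affine substitution `λ ↦ λC − 2D`, and adding the strictly
concave quadratic `−θCλ² + 2θDλ` makes `U` strictly concave. The domain `I` is the preimage of
the domain of `g`, hence convex.
-/

open Real Set

section LogRatio

variable {a b : ℝ}

lemma ordConnected_setOf_one_add_mul_pos (ha : 0 ≤ a) (hb : 0 ≤ b) :
    {x : ℝ | 0 < 1 + x * a ∧ 0 < 1 + x * b}.OrdConnected :=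
  ⟨fun _ hx _ _ _ hz => ⟨by nlinarith [hx.1, hz.1], by nlinarith [hx.2, hz.1]⟩⟩

lemma isOpen_setOf_one_add_mul_pos (a b : ℝ) :
    IsOpen {x : ℝ | 0 < 1 + x * a ∧ 0 < 1 + x * b} :=
  (isOpen_lt continuous_const (by fun_prop : Continuous fun x : ℝ => 1 + x * a)).inter
    (isOpen_lt continuous_const (by fun_prop : Continuous fun x : ℝ => 1 + x * b))

lemma hasDerivAt_log_one_add_mul_sub_log_one_add_mul {x : ℝ} (hxa : 0 < 1 + x * a)
    (hxb : 0 < 1 + x * b) :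
    HasDerivAt (fun x => log (1 + x * a) - log (1 + x * b))
      ((a - b) / ((1 + x * a) * (1 + x * b))) x := by
  have hlin : ∀ c, HasDerivAt (fun x : ℝ => 1 + x * c) c x := fun c => by
    simpa using ((hasDerivAt_id x).mul_const c).const_add 1
  refine (((hlin a).log hxa.ne').sub ((hlin b).log hxb.ne')).congr_deriv ?_
  rw [div_sub_div _ _ hxa.ne' hxb.ne']
  ring

lemma concaveOn_log_one_add_mul_sub_log_one_add_mul (hb : 0 ≤ b) (hba : b ≤ a) :
    ConcaveOn ℝ {x : ℝ | 0 < 1 + x * a ∧ 0 < 1 + x * b}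
      (fun x => log (1 + x * a) - log (1 + x * b)) := by
  have hderiv := fun x (hx : x ∈ {x : ℝ | 0 < 1 + x * a ∧ 0 < 1 + x * b}) =>
    hasDerivAt_log_one_add_mul_sub_log_one_add_mul hx.1 hx.2
  refine AntitoneOn.concaveOn_of_deriv
    (ordConnected_setOf_one_add_mul_pos (hb.trans hba) hb).convex
    (fun x hx => (hderiv x hx).continuousAt.continuousWithinAt) ?_ ?_
  all_goals rw [(isOpen_setOf_one_add_mul_pos a b).interior_eq]
  · exact fun x hx => (hderiv x hx).differentiableAt.differentiableWithinAt
  · intro x hx y hy hxy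
    rw [(hderiv x hx).deriv, (hderiv y hy).deriv]
    exact div_le_div_of_nonneg_left (sub_nonneg.2 hba) (mul_pos hx.1 hx.2)
      (mul_le_mul (by nlinarith) (by nlinarith) hx.2.le hy.1.le)

end LogRatio

lemma ConcaveOn.comp_mul_sub {f : ℝ → ℝ} {s : Set ℝ} (hf : ConcaveOn ℝ s f) (c d : ℝ) :
    ConcaveOn ℝ {x | x * c - d ∈ s} (fun x => f (x * c - d)) := by
  have h : ⇑(AffineMap.lineMap (-d) (c - d) : ℝ →ᵃ[ℝ] ℝ) = fun x => x * c - d := by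
    funext x; rw [AffineMap.lineMap_apply_ring']; ring
  have := hf.comp_affineMap (AffineMap.lineMap (-d) (c - d))
  rwa [h] at this

lemma strictConcaveOn_neg_mul_sq_add_mul {α : ℝ} (hα : 0 < α) (β : ℝ) :
    StrictConcaveOn ℝ univ (fun x => -(α * x ^ 2) + β * x) := by
  refine ⟨convex_univ, fun x _ y _ hxy s t hs ht hst => ?_⟩
  have hgap : 0 < α * s * t * (x - y) ^ 2 := by
    have := sub_ne_zero.2 hxy
    positivity
  calc s • (-(α * x ^ 2) + β * x) + t • (-(α * y ^ 2) + β * y)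
      = -(α * (s * x + t * y) ^ 2) + β * (s * x + t * y) - α * s * t * (x - y) ^ 2 := by
        simp only [smul_eq_mul]
        linear_combination α * (s * x ^ 2 + t * y ^ 2) * hst
    _ < -(α * (s • x + t • y) ^ 2) + β * (s • x + t • y) := sub_lt_self _ hgap

theorem stmt1_general (μ θ C D ts te : ℝ) (hμ : 0 < μ) (hθ : θ ∈ Set.Ioo (0:ℝ) 1)
    (hC : 0 < C) (hte : 0 < te) (hts : te < ts)
    (U : ℝ → ℝ)
    (hU : ∀ lam, U lam =
      μ * (1 - θ) * (Real.logb 2 (1 + (lam * C - 2 * D) * ts)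
        - Real.logb 2 (1 + (lam * C - 2 * D) * te))
      - θ * lam ^ 2 * C + 2 * θ * lam * D)
    (I : Set ℝ)
    (hI : I = {lam : ℝ | 0 < 1 + (lam * C - 2 * D) * ts ∧
      0 < 1 + (lam * C - 2 * D) * te}) :
    I.OrdConnected ∧ StrictConcaveOn ℝ I U := by
  obtain ⟨hθ0, hθ1⟩ := hθ
  have hlog : ConcaveOn ℝ I
      (fun lam => μ * (1 - θ) / log 2 *
        (log (1 + (lam * C - 2 * D) * ts) - log (1 + (lam * C - 2 * D) * te))) := by
    rw [hI]
    exact ((concaveOn_log_one_add_mul_sub_log_one_add_mul hte.le hts.le).comp_mul_sub C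
      (2 * D)).smul (div_nonneg (mul_nonneg hμ.le (sub_nonneg.2 hθ1.le)) (log_nonneg one_le_two))
  have hquad : StrictConcaveOn ℝ I (fun lam => -(θ * C * lam ^ 2) + 2 * θ * D * lam) :=
    (strictConcaveOn_neg_mul_sq_add_mul (mul_pos hθ0 hC) _).subset (subset_univ I) hlog.1
  have hUeq : U = fun lam => μ * (1 - θ) / log 2 *
        (log (1 + (lam * C - 2 * D) * ts) - log (1 + (lam * C - 2 * D) * te)) +
      (-(θ * C * lam ^ 2) + 2 * θ * D * lam) := by
    funext lam
    rw [hU, logb, logb]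
    ring
  exact ⟨hlog.1.ordConnected, hUeq ▸ hlog.add_strictConcaveOn hquad⟩

/-- The transmitter's (leader's) utility
`U(λ) = μ(1−θ)[log₂(1+(λC−2D)tₛ) − log₂(1+(λC−2D)tₑ)] − θλ²C + 2θλD`
is strictly concave on the set `I` where both log arguments are positive,
and `I` is an interval (order-connected). -/
theorem stmt1 (μ θ C D ts te : ℝ) (hμ : 0 < μ) (hθ : θ ∈ Set.Ioo (0:ℝ) 1)
    (hC : 0 < C) (hD : 0 < D) (hte : 0 < te) (hts : te < ts)
    (U : ℝ → ℝ)
    (hU : ∀ lam, U lam =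
      μ * (1 - θ) * (Real.logb 2 (1 + (lam * C - 2 * D) * ts)
        - Real.logb 2 (1 + (lam * C - 2 * D) * te))
      - θ * lam ^ 2 * C + 2 * θ * lam * D)
    (I : Set ℝ)
    (hI : I = {lam : ℝ | 0 < 1 + (lam * C - 2 * D) * ts ∧
      0 < 1 + (lam * C - 2 * D) * te}) :
    I.OrdConnected ∧ StrictConcaveOn ℝ I U :=
  stmt1_general μ θ C D ts te hμ hθ hC hte hts U hU I hI
end

section
/- Let t_s > t_e > 0 be real constants. Then the function f(θ) = (1−θ)·log₂( (1−θ+θ·t_s) / (1−θ+θ·t_e) ) is concave on the open interval (0,1). -/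
/-!
Up to the factor `1 / log 2`, the rate is `h ts - h te` with `h t θ = (1 - θ) log (1 - θ + θ t)`.
The second `θ`-derivative of `h t`, namely `-(t - 1)(L + t) / L²` with `L = 1 - θ + θ t`, is
antitone in `t > 0`, so the rate has a nonpositive second derivative.
-/

open Set Real

noncomputable section

def weightedLog (t θ : ℝ) : ℝ := (1 - θ) * log (1 - θ + θ * t)

def weightedLogDeriv (t θ : ℝ) : ℝ :=
  -log (1 - θ + θ * t) + (1 - θ) * (t - 1) / (1 - θ + θ * t)

def weightedLogDeriv2 (t θ : ℝ) : ℝ :=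
  -(t - 1) * (1 - θ + θ * t + t) / (1 - θ + θ * t) ^ 2

end

lemma hasDerivAt_one_sub_add_mul (t x : ℝ) :
    HasDerivAt (fun θ : ℝ => 1 - θ + θ * t) (t - 1) x :=
  (((hasDerivAt_id' x).const_sub 1).add ((hasDerivAt_id' x).mul_const t)).congr_deriv (by ring)

section

variable {a b t x : ℝ}

lemma one_sub_add_mul_pos (ht : 0 < t) (hx : x ∈ Icc (0 : ℝ) 1) : 0 < 1 - x + x * t := by
  obtain ⟨hx0, hx1⟩ := hx
  rcases hx1.lt_or_eq with hx1 | rfl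
  · nlinarith [mul_nonneg hx0 ht.le]
  · simpa using ht

lemma hasDerivAt_weightedLog (hx : 0 < 1 - x + x * t) :
    HasDerivAt (weightedLog t) (weightedLogDeriv t x) x := by
  refine (((hasDerivAt_id' x).const_sub 1).mul
    ((hasDerivAt_one_sub_add_mul t x).log hx.ne')).congr_deriv ?_
  simp only [weightedLogDeriv]
  ring

lemma hasDerivAt_weightedLogDeriv (hx : 0 < 1 - x + x * t) :
    HasDerivAt (weightedLogDeriv t) (weightedLogDeriv2 t x) x := by
  have hL := hasDerivAt_one_sub_add_mul t x
  refine ((hL.log hx.ne').neg.add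
    ((((hasDerivAt_id' x).const_sub 1).mul_const (t - 1)).div hL hx.ne')).congr_deriv ?_
  simp only [weightedLogDeriv2]
  field_simp
  ring

lemma weightedLogDeriv2_sub (hA : 0 < 1 - x + x * a) (hB : 0 < 1 - x + x * b) :
    weightedLogDeriv2 a x - weightedLogDeriv2 b x =
      -((a - b) * ((1 - x + x * b) * a + (1 - x + x * a) * b)) /
        ((1 - x + x * a) ^ 2 * (1 - x + x * b) ^ 2) := by
  unfold weightedLogDeriv2
  rw [div_sub_div _ _ (by positivity) (by positivity), div_eq_div_iff (by positivity) (by positivity)]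
  ring

lemma weightedLogDeriv2_le_of_le (hb : 0 < b) (hab : b ≤ a) (hx : x ∈ Icc (0 : ℝ) 1) :
    weightedLogDeriv2 a x ≤ weightedLogDeriv2 b x := by
  have ha := hb.trans_le hab
  have hA := one_sub_add_mul_pos ha hx
  have hB := one_sub_add_mul_pos hb hx
  rw [← sub_nonpos, weightedLogDeriv2_sub hA hB]
  have hnum : 0 ≤ (a - b) * ((1 - x + x * b) * a + (1 - x + x * a) * b) := by
    have := sub_nonneg.2 hab
    positivity
  exact div_nonpos_of_nonpos_of_nonneg (neg_nonpos.2 hnum) (by positivity)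

theorem concaveOn_weightedLog_sub (hb : 0 < b) (hab : b ≤ a) :
    ConcaveOn ℝ (Icc 0 1) (weightedLog a - weightedLog b) := by
  have ha := hb.trans_le hab
  have hderiv : ∀ x ∈ Icc (0 : ℝ) 1,
      HasDerivAt (weightedLog a - weightedLog b) ((weightedLogDeriv a - weightedLogDeriv b) x) x :=
    fun x hx => (hasDerivAt_weightedLog (one_sub_add_mul_pos ha hx)).sub
      (hasDerivAt_weightedLog (one_sub_add_mul_pos hb hx))
  have hderiv2 : ∀ x ∈ Icc (0 : ℝ) 1, HasDerivAt (weightedLogDeriv a - weightedLogDeriv b)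
      ((weightedLogDeriv2 a - weightedLogDeriv2 b) x) x :=
    fun x hx => (hasDerivAt_weightedLogDeriv (one_sub_add_mul_pos ha hx)).sub
      (hasDerivAt_weightedLogDeriv (one_sub_add_mul_pos hb hx))
  refine concaveOn_of_hasDerivWithinAt2_nonpos (convex_Icc 0 1)
    (fun x hx => (hderiv x hx).continuousAt.continuousWithinAt)
    (fun x hx => (hderiv x (interior_subset hx)).hasDerivWithinAt)
    (fun x hx => (hderiv2 x (interior_subset hx)).hasDerivWithinAt)
    (fun x hx => sub_nonpos.2 (weightedLogDeriv2_le_of_le hb hab (interior_subset hx)))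

end

/-- The secrecy rate `f(θ) = (1−θ)·log₂((1−θ+θ·tₛ)/(1−θ+θ·tₑ))` is concave on `(0,1)`
whenever `tₛ > tₑ > 0`. -/
theorem stmt2 (ts te : ℝ) (hte : 0 < te) (hts : te < ts) :
    ConcaveOn ℝ (Set.Ioo (0:ℝ) 1)
      (fun θ : ℝ => (1 - θ) * Real.logb 2 ((1 - θ + θ * ts) / (1 - θ + θ * te))) := by
  have hconc := ((concaveOn_weightedLog_sub hte hts.le).subset Ioo_subset_Icc_self
    (convex_Ioo 0 1)).smul (inv_nonneg.2 (log_nonneg one_le_two))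
  refine hconc.congr fun x hx => ?_
  have hA := one_sub_add_mul_pos (hte.trans hts) (Ioo_subset_Icc_self hx)
  have hB := one_sub_add_mul_pos hte (Ioo_subset_Icc_self hx)
  simp only [Pi.sub_apply, weightedLog, smul_eq_mul, logb, log_div hA.ne' hB.ne']
  ring
end

section
/- Let t > 0 be a real constant. Then the function h(z) = z·log₂( (t + (1−t)·z) / z ) is concave on the open interval (0,1), and strictly concave if t ≠ 1. -/
/-!
For `u = a + b z`, the function `h(z) = z log(u / z)` has `h'(z) = log(u / z) - a / u` and
`h''(z) = -a² / (z u²)`, which is negative wherever `z > 0` and `u > 0` as soon as `a ≠ 0`.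
With `a = t`, `b = 1 - t` this region contains `(0, 1)`, and `log₂` is a positive multiple of `log`.
-/

open Real Set Filter Topology

lemma StrictConcaveOn.div_const {𝕜 E : Type*} [Field 𝕜] [LinearOrder 𝕜] [IsStrictOrderedRing 𝕜]
    [AddCommMonoid E] [Module 𝕜 E] {s : Set E} {f : E → 𝕜} (hf : StrictConcaveOn 𝕜 s f) {c : 𝕜}
    (hc : 0 < c) : StrictConcaveOn 𝕜 s (fun x => f x / c) := by
  refine ⟨hf.1, fun x hx y hy hxy μ ν hμ hν hμν => ?_⟩
  calc μ • (f x / c) + ν • (f y / c) = (μ • f x + ν • f y) / c := by simp only [smul_eq_mul]; ring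
    _ < f (μ • x + ν • y) / c := div_lt_div_of_pos_right (hf.2 hx hy hxy hμ hν hμν) hc

section MulLogDiv

variable {a b z : ℝ}

lemma hasDerivAt_affine_div_self (hz : z ≠ 0) :
    HasDerivAt (fun z => (a + b * z) / z) (-a / z ^ 2) z :=
  ((((hasDerivAt_id' z).const_mul b).const_add a).div (hasDerivAt_id' z) hz).congr_deriv
    (by ring)

lemma hasDerivAt_mul_log_affine_div_self (hz : 0 < z) (hu : 0 < a + b * z) :
    HasDerivAt (fun z => z * log ((a + b * z) / z))
      (log ((a + b * z) / z) - a / (a + b * z)) z := by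
  have hlog := (hasDerivAt_affine_div_self hz.ne').log (div_pos hu hz).ne'
  exact ((hasDerivAt_id' z).mul hlog).congr_deriv (by field_simp; ring)

lemma hasDerivAt_log_affine_div_self_sub (hz : 0 < z) (hu : 0 < a + b * z) :
    HasDerivAt (fun z => log ((a + b * z) / z) - a / (a + b * z))
      (-a ^ 2 / (z * (a + b * z) ^ 2)) z := by
  have hlog := (hasDerivAt_affine_div_self hz.ne').log (div_pos hu hz).ne'
  have hinv := (hasDerivAt_const z a).div (((hasDerivAt_id' z).const_mul b).const_add a) hu.ne'
  exact (hlog.sub hinv).congr_deriv (by field_simp; ring)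

lemma convex_setOf_pos_and_affine_pos :
    Convex ℝ {z : ℝ | 0 < z ∧ 0 < a + b * z} := by
  refine (convex_Ioi 0).inter fun x hx y hy μ ν hμ hν hμν => ?_
  have hx : 0 < a + b * x := hx
  have hy : 0 < a + b * y := hy
  show 0 < a + b * (μ * x + ν * y)
  have hsplit : a + b * (μ * x + ν * y) = μ * (a + b * x) + ν * (a + b * y) := by
    linear_combination a * hμν.symm
  rw [hsplit]
  rcases hμ.eq_or_lt with rfl | hμ
  · simpa [show ν = 1 by linarith] using hy
  · positivity

lemma strictConcaveOn_mul_log_affine_div_self (ha : a ≠ 0) :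
    StrictConcaveOn ℝ {z | 0 < z ∧ 0 < a + b * z} (fun z => z * log ((a + b * z) / z)) := by
  have hopen : IsOpen {z : ℝ | 0 < z ∧ 0 < a + b * z} :=
    (isOpen_lt continuous_const continuous_id).inter
      (isOpen_lt continuous_const (continuous_const.add (continuous_const_mul b)))
  refine strictConcaveOn_of_deriv2_neg convex_setOf_pos_and_affine_pos
    (fun z hz => (hasDerivAt_mul_log_affine_div_self hz.1 hz.2).continuousAt.continuousWithinAt)
    fun z hz => ?_
  rw [hopen.interior_eq] at hz
  obtain ⟨hz, hu⟩ := hz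
  have hderiv : deriv (fun z => z * log ((a + b * z) / z)) =ᶠ[𝓝 z]
      fun z => log ((a + b * z) / z) - a / (a + b * z) :=
    eventually_of_mem (hopen.mem_nhds ⟨hz, hu⟩) fun w hw =>
      (hasDerivAt_mul_log_affine_div_self hw.1 hw.2).deriv
  show deriv (deriv _) z < 0
  rw [hderiv.deriv_eq, (hasDerivAt_log_affine_div_self_sub hz hu).deriv]
  exact div_neg_of_neg_of_pos (neg_neg_of_pos (by positivity)) (by positivity)

end MulLogDiv

/-- For `t > 0`, the function `h(z) = z·log₂((t+(1−t)z)/z)` is concave on `(0,1)`,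
and strictly concave if `t ≠ 1`. -/
theorem stmt3 (t : ℝ) (ht : 0 < t) :
    ConcaveOn ℝ (Set.Ioo (0:ℝ) 1)
      (fun z : ℝ => z * Real.logb 2 ((t + (1 - t) * z) / z)) ∧
    (t ≠ 1 → StrictConcaveOn ℝ (Set.Ioo (0:ℝ) 1)
      (fun z : ℝ => z * Real.logb 2 ((t + (1 - t) * z) / z))) := by
  have hdomain : Ioo (0 : ℝ) 1 ⊆ {z | 0 < z ∧ 0 < t + (1 - t) * z} := fun z hz =>
    ⟨hz.1, by linarith [mul_pos ht (sub_pos.2 hz.2), hz.1]⟩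
  have hstrict : StrictConcaveOn ℝ (Ioo (0 : ℝ) 1)
      (fun z => z * logb 2 ((t + (1 - t) * z) / z)) :=
    (((strictConcaveOn_mul_log_affine_div_self ht.ne').subset hdomain (convex_Ioo 0 1)).div_const
      (log_pos one_lt_two)).congr fun z _ => by simp only [logb, mul_div_assoc]
  exact ⟨hstrict.concaveOn, fun _ => hstrict⟩
end

section
/- Let R̄ > 0, and for k = 1,…,K and l = 1,…,L let t_{s,k} > t_{e,l} > 0 be real constants (for every pair (k,l)). Then the set Θ = { θ ∈ (0,1) : (1−θ)·log₂( (1−θ+θ·t_{s,k}) / (1−θ+θ·t_{e,l}) ) ≥ R̄ for all k, l } is a convex subset of ℝ, and for every constant c > 0 the objective θ ↦ c·θ/(1−θ) is convex on (0,1). Hence the outer-level time-allocation problem of minimizing c·θ/(1−θ) over Θ is a convex optimization problem. -/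
/-!
The secrecy constraint `(1 - θ) * logb β ((1 - θ + θ a) / (1 - θ + θ b))` is the perspective
`(u, x) ↦ u * φ (x / u)` of `φ x = logb β ((1 + a x) / (1 + b x))`, restricted to the segment
`(u, x) = (1 - θ, θ)`. Since `(1 + a x) / (1 + b x) = a / b - (a - b) / b * (1 + b x)⁻¹` is concave
and `logb β` is concave and monotone, `φ` is concave, hence so is its perspective, and each
constraint cuts out a convex superlevel set. The objective is `c * (1 - θ)⁻¹ - c`, convex because
`x⁻¹` is.
-/

open Set Real

theorem ConcaveOn.perspective {E : Type*} [AddCommGroup E] [Module ℝ E] {s : Set E} {φ : E → ℝ}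
    (hφ : ConcaveOn ℝ s φ) :
    ConcaveOn ℝ {p : ℝ × E | 0 < p.1 ∧ p.1⁻¹ • p.2 ∈ s} (fun p => p.1 * φ (p.1⁻¹ • p.2)) := by
  -- `x / u` is the convex combination of `x₁ / u₁` and `x₂ / u₂` with weights `a u₁ / u`, `b u₂ / u`.
  have key : ∀ {a b : ℝ} {p q : ℝ × E}, 0 ≤ a → 0 ≤ b → a + b = 1 → 0 < p.1 → 0 < q.1 →
      0 < (a • p + b • q).1 ∧
      (a • p + b • q).1⁻¹ • (a • p + b • q).2 =
        (a * p.1 / (a • p + b • q).1) • (p.1⁻¹ • p.2) +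
          (b * q.1 / (a • p + b • q).1) • (q.1⁻¹ • q.2) ∧
      a * p.1 / (a • p + b • q).1 + b * q.1 / (a • p + b • q).1 = 1 := by
    intro a b p q ha hb hab hp hq
    simp only [Prod.fst_add, Prod.smul_fst, Prod.snd_add, Prod.smul_snd, smul_eq_mul]
    have hu : 0 < a * p.1 + b * q.1 := by
      rcases ha.lt_or_eq with ha | rfl
      · positivity
      · simp only [zero_add] at hab; subst hab; simpa using hq
    refine ⟨hu, ?_, by field_simp⟩
    rw [smul_smul, smul_smul, smul_add, smul_smul, smul_smul]
    congr 2 <;> field_simp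
  refine ⟨?_, ?_⟩
  · rintro p ⟨hp, hps⟩ q ⟨hq, hqs⟩ a b ha hb hab
    obtain ⟨hu, heq, hw⟩ := key ha hb hab hp hq
    refine ⟨hu, ?_⟩
    rw [heq]
    exact hφ.1 hps hqs (by positivity) (by positivity) hw
  · rintro p ⟨hp, hps⟩ q ⟨hq, hqs⟩ a b ha hb hab
    obtain ⟨hu, heq, hw⟩ := key ha hb hab hp hq
    set u := (a • p + b • q).1
    have := hφ.2 hps hqs (by positivity : 0 ≤ a * p.1 / u) (by positivity : 0 ≤ b * q.1 / u) hw
    show _ ≤ u * φ (u⁻¹ • (a • p + b • q).2)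
    rw [heq]
    calc a • (p.1 * φ (p.1⁻¹ • p.2)) + b • (q.1 * φ (q.1⁻¹ • q.2))
        = u * ((a * p.1 / u) • φ (p.1⁻¹ • p.2) + (b * q.1 / u) • φ (q.1⁻¹ • q.2)) := by
          simp only [smul_eq_mul]; field_simp
      _ ≤ u * φ _ := by gcongr

theorem ConcaveOn.comp_of_mapsTo {E : Type*} [AddCommGroup E] [Module ℝ E] {s : Set E}
    {t : Set ℝ} {f : E → ℝ} {g : ℝ → ℝ} (hg : ConcaveOn ℝ t g) (hg_mono : MonotoneOn g t)
    (hf : ConcaveOn ℝ s f) (hst : MapsTo f s t) : ConcaveOn ℝ s (g ∘ f) := by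
  refine ⟨hf.1, fun x hx y hy a b ha hb hab => ?_⟩
  calc a • g (f x) + b • g (f y) ≤ g (a • f x + b • f y) :=
        hg.2 (hst hx) (hst hy) ha hb hab
    _ ≤ g (f (a • x + b • y)) :=
        hg_mono (hg.1 (hst hx) (hst hy) ha hb hab) (hst (hf.1 hx hy ha hb hab))
          (hf.2 hx hy ha hb hab)

theorem Real.concaveOn_logb_Ioi {β : ℝ} (hβ : 1 < β) : ConcaveOn ℝ (Ioi 0) (logb β) := by
  refine (strictConcaveOn_log_Ioi.concaveOn.smul (inv_nonneg.2 (log_nonneg hβ.le))).congr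
    fun x _ => ?_
  simp only [logb, smul_eq_mul, div_eq_inv_mul]

theorem concaveOn_one_add_mul_div_one_add_mul {a b : ℝ} (hb : 0 < b) (hab : b ≤ a) :
    ConcaveOn ℝ (Ici 0) (fun x => (1 + a * x) / (1 + b * x)) := by
  have hinv : ConvexOn ℝ (Ici 0) (fun x : ℝ => (1 + b * x)⁻¹) := by
    refine (((convexOn_zpow (𝕜 := ℝ) (-1)).comp_affineMap
      (AffineMap.lineMap (1 : ℝ) (1 + b))).subset ?_ (convex_Ici 0)).congr ?_
    · intro x hx
      simp only [mem_preimage, AffineMap.lineMap_apply_ring', mem_Ioi]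
      simp only [mem_Ici] at hx
      nlinarith
    · intro x hx
      simp only [Function.comp_apply, AffineMap.lineMap_apply_ring', add_sub_cancel_left,
        zpow_neg_one]
      ring
  refine ((hinv.smul (div_nonneg (sub_nonneg.2 hab) hb.le)).neg.add_const (a / b)).congr ?_
  intro x hx
  simp only [mem_Ici] at hx
  have : 1 + b * x ≠ 0 := by positivity
  show -((a - b) / b * (1 + b * x)⁻¹) + a / b = _
  field_simp
  ring

theorem concaveOn_logb_one_add_mul_div_one_add_mul {β a b : ℝ} (hβ : 1 < β) (hb : 0 < b)
    (hab : b ≤ a) : ConcaveOn ℝ (Ici 0) (fun x => logb β ((1 + a * x) / (1 + b * x))) := by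
  refine (Real.concaveOn_logb_Ioi hβ).comp_of_mapsTo
    (fun x hx y _ hxy => logb_le_logb_of_le hβ hx hxy)
    (concaveOn_one_add_mul_div_one_add_mul hb hab) fun x hx => ?_
  simp only [mem_Ici] at hx
  have : 0 ≤ a * x := by nlinarith
  simp only [mem_Ioi]
  positivity

theorem concaveOn_one_sub_mul_logb_div {β a b : ℝ} (hβ : 1 < β) (hb : 0 < b) (hab : b ≤ a) :
    ConcaveOn ℝ (Ioo 0 1) (fun θ => (1 - θ) * logb β ((1 - θ + θ * a) / (1 - θ + θ * b))) := by
  have hline : ∀ θ : ℝ, AffineMap.lineMap ((1 : ℝ), (0 : ℝ)) (0, 1) θ = (1 - θ, θ) := fun θ => by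
    simp [AffineMap.lineMap_apply_module]
  refine (((concaveOn_logb_one_add_mul_div_one_add_mul hβ hb hab).perspective.comp_affineMap
    (AffineMap.lineMap ((1 : ℝ), (0 : ℝ)) (0, 1))).subset ?_ (convex_Ioo 0 1)).congr ?_
  · rintro θ ⟨h0, h1⟩
    simp only [mem_preimage, hline, mem_ofPred_eq, mem_Ici, smul_eq_mul]
    have : 0 < 1 - θ := by linarith
    exact ⟨this, by positivity⟩
  · rintro θ ⟨h0, h1⟩
    have : 1 - θ ≠ 0 := by linarith
    simp only [Function.comp_apply, hline, smul_eq_mul]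
    congr 2
    field_simp

theorem convexOn_mul_div_one_sub {c : ℝ} (hc : 0 ≤ c) :
    ConvexOn ℝ (Iio 1) (fun θ => c * θ / (1 - θ)) := by
  refine ((((convexOn_zpow (𝕜 := ℝ) (-1)).comp_affineMap
      (AffineMap.lineMap (1 : ℝ) 0)).subset ?_ (convex_Iio 1)).smul hc |>.add_const (-c)).congr ?_
  · intro x hx
    simp only [mem_preimage, AffineMap.lineMap_apply_ring, mem_Ioi]
    simp only [mem_Iio] at hx
    linarith
  · intro x hx
    simp only [mem_Iio] at hx
    have : (1 - x) ≠ 0 := by linarith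
    simp only [Function.comp_apply, AffineMap.lineMap_apply_ring, mul_one, mul_zero, add_zero,
      zpow_neg_one, smul_eq_mul, Pi.add_apply]
    field_simp
    ring

theorem stmt5_general {K L : ℕ} (R : ℝ) (ts : Fin K → ℝ) (te : Fin L → ℝ)
    (hte : ∀ l, 0 < te l) (hstse : ∀ k l, te l < ts k)
    (Θ : Set ℝ)
    (hΘ : Θ = {θ : ℝ | θ ∈ Set.Ioo (0:ℝ) 1 ∧ ∀ k l,
      R ≤ (1 - θ) * Real.logb 2 ((1 - θ + θ * ts k) / (1 - θ + θ * te l))}) :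
    Convex ℝ Θ ∧
      ∀ c : ℝ, 0 < c →
        ConvexOn ℝ (Set.Ioo (0:ℝ) 1) (fun θ : ℝ => c * θ / (1 - θ)) := by
  refine ⟨?_, fun c hc =>
    (convexOn_mul_div_one_sub hc.le).subset Ioo_subset_Iio_self (convex_Ioo 0 1)⟩
  subst hΘ
  rintro x ⟨hx, hxR⟩ y ⟨hy, hyR⟩ a b ha hb hab
  refine ⟨convex_Ioo 0 1 hx hy ha hb hab, fun k l => ?_⟩
  have hconc := concaveOn_one_sub_mul_logb_div one_lt_two (hte l) (hstse k l).le
  exact (hconc.convex_ge R ⟨hx, hxR k l⟩ ⟨hy, hyR k l⟩ ha hb hab).2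

/-- The outer-level time-allocation problem is convex: the feasible set
`Θ = {θ ∈ (0,1) : (1−θ)·log₂((1−θ+θ·t_{s,k})/(1−θ+θ·t_{e,l})) ≥ R̄ for all k,l}`
is convex, and for every `c > 0` the objective `θ ↦ c·θ/(1−θ)` is convex on `(0,1)`. -/
theorem stmt5 {K L : ℕ} (R : ℝ) (hR : 0 < R) (ts : Fin K → ℝ) (te : Fin L → ℝ)
    (hte : ∀ l, 0 < te l) (hstse : ∀ k l, te l < ts k)
    (Θ : Set ℝ)
    (hΘ : Θ = {θ : ℝ | θ ∈ Set.Ioo (0:ℝ) 1 ∧ ∀ k l,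
      R ≤ (1 - θ) * Real.logb 2 ((1 - θ + θ * ts k) / (1 - θ + θ * te l))}) :
    Convex ℝ Θ ∧
      ∀ c : ℝ, 0 < c →
        ConvexOn ℝ (Set.Ioo (0:ℝ) 1) (fun θ : ℝ => c * θ / (1 - θ)) :=
  stmt5_general R ts te hte hstse Θ hΘ
end

section
/- Let h_s, h_e ∈ ℂⁿ, σ_s, σ_e > 0 and R > 0. Define the Hermitian matrix A = (1/σ_s²)·h_s h_s* − (2^R/σ_e²)·h_e h_e*, and assume its largest eigenvalue λ_max(A) is positive. Then the infimum of ‖w‖² over all w ∈ ℂⁿ satisfying |h_s* w|²/σ_s² − 2^R·|h_e* w|²/σ_e² ≥ 2^R − 1 equals (2^R − 1)/λ_max(A), and it is attained at w_opt = √((2^R − 1)/λ_max(A)) · v, where v is any unit-norm eigenvector of A associated with λ_max(A). -/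
/-!
The constraint says exactly that the Hermitian form `w ↦ Re (w* A w)` is at least `2^R − 1`.
Since `A ≤ λmax • 1` in the Loewner order, that form is at most `λmax ‖w‖²`, which gives the lower
bound; the top eigenvector scaled to `‖w‖² = (2^R − 1)/λmax` attains it.
-/

open Matrix
open scoped MatrixOrder

namespace Matrix

variable {𝕜 ι : Type*} [RCLike 𝕜] [Fintype ι]

theorem star_dotProduct_self_eq_sum_norm_sq (x : ι → 𝕜) :
    star x ⬝ᵥ x = ((∑ i, ‖x i‖ ^ 2 : ℝ) : 𝕜) := by
  simp only [dotProduct, Pi.star_apply, RCLike.star_def, RCLike.conj_mul, RCLike.ofReal_sum,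
    RCLike.ofReal_pow]

theorem star_dotProduct_vecMulVec_mulVec (a w : ι → 𝕜) :
    star w ⬝ᵥ vecMulVec a (star a) *ᵥ w = ((‖star a ⬝ᵥ w‖ ^ 2 : ℝ) : 𝕜) := by
  rw [vecMulVec_mulVec, op_smul_eq_smul, dotProduct_smul, star_dotProduct (v := w),
    smul_eq_mul, RCLike.star_def, RCLike.mul_conj, RCLike.ofReal_pow]

theorem re_star_dotProduct_smul_vecMulVec_sub_smul_vecMulVec_mulVec (α β : ℝ)
    (a b w : ι → 𝕜) :
    RCLike.re (star w ⬝ᵥ (α • vecMulVec a (star a) - β • vecMulVec b (star b)) *ᵥ w) =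
      α * ‖star a ⬝ᵥ w‖ ^ 2 - β * ‖star b ⬝ᵥ w‖ ^ 2 := by
  simp only [sub_mulVec, smul_mulVec, dotProduct_sub, dotProduct_smul,
    star_dotProduct_vecMulVec_mulVec, map_sub, RCLike.real_smul_eq_coe_mul,
    ← RCLike.ofReal_mul, RCLike.ofReal_re]

theorem re_star_dotProduct_mulVec_of_mulVec_eq_smul {A : Matrix ι ι 𝕜} {μ : ℝ}
    {v : ι → 𝕜} (hv : A *ᵥ v = (μ : 𝕜) • v) :
    RCLike.re (star v ⬝ᵥ A *ᵥ v) = μ * ∑ i, ‖v i‖ ^ 2 := by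
  rw [hv, dotProduct_smul, star_dotProduct_self_eq_sum_norm_sq, smul_eq_mul,
    ← RCLike.ofReal_mul, RCLike.ofReal_re]

theorem IsHermitian.re_star_dotProduct_mulVec_le [DecidableEq ι] {A : Matrix ι ι 𝕜}
    (hA : A.IsHermitian) {c : ℝ} (hc : ∀ i, hA.eigenvalues i ≤ c) (x : ι → 𝕜) :
    RCLike.re (star x ⬝ᵥ A *ᵥ x) ≤ c * ∑ i, ‖x i‖ ^ 2 := by
  have hle : A ≤ algebraMap ℝ (Matrix ι ι 𝕜) c := by
    refine le_algebraMap_of_spectrum_le (fun r hr => ?_) hA.isSelfAdjoint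
    obtain ⟨i, rfl⟩ := hA.spectrum_real_eq_range_eigenvalues ▸ hr
    exact hc i
  have hx := (Matrix.le_iff.mp hle).re_dotProduct_nonneg x
  rw [Algebra.algebraMap_eq_smul_one, sub_mulVec, dotProduct_sub, map_sub, smul_mulVec,
    one_mulVec, dotProduct_smul, star_dotProduct_self_eq_sum_norm_sq, RCLike.real_smul_eq_coe_mul,
    ← RCLike.ofReal_mul, RCLike.ofReal_re] at hx
  linarith

end Matrix

theorem stmt7_general {n : ℕ} (hs he : Fin n → ℂ) (σs σe R : ℝ)
    (hR : 0 < R)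
    (A : Matrix (Fin n) (Fin n) ℂ)
    (hAdef : A = ((σs ^ 2)⁻¹ : ℝ) • Matrix.vecMulVec hs (star hs)
      - (((2:ℝ) ^ R / σe ^ 2 : ℝ)) • Matrix.vecMulVec he (star he))
    (hA : A.IsHermitian)
    (lmax : ℝ) (hlmax : IsGreatest (Set.range hA.eigenvalues) lmax) (hpos : 0 < lmax)
    (v : Fin n → ℂ) (hv : A.mulVec v = (lmax : ℂ) • v) (hvnorm : ∑ i, ‖v i‖ ^ 2 = 1)
    (wopt : Fin n → ℂ)
    (hwopt : wopt = (Real.sqrt (((2:ℝ) ^ R - 1) / lmax) : ℂ) • v) :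
    (∀ w : Fin n → ℂ,
        (2:ℝ) ^ R - 1 ≤ ‖dotProduct (star hs) w‖ ^ 2 / σs ^ 2
            - (2:ℝ) ^ R * (‖dotProduct (star he) w‖ ^ 2 / σe ^ 2) →
        ((2:ℝ) ^ R - 1) / lmax ≤ ∑ i, ‖w i‖ ^ 2) ∧
    ((2:ℝ) ^ R - 1 ≤ ‖dotProduct (star hs) wopt‖ ^ 2 / σs ^ 2
        - (2:ℝ) ^ R * (‖dotProduct (star he) wopt‖ ^ 2 / σe ^ 2)) ∧
    (∑ i, ‖wopt i‖ ^ 2 = ((2:ℝ) ^ R - 1) / lmax) := by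
  have hform (w : Fin n → ℂ) : RCLike.re (star w ⬝ᵥ A *ᵥ w) =
      ‖star hs ⬝ᵥ w‖ ^ 2 / σs ^ 2 - (2:ℝ) ^ R * (‖star he ⬝ᵥ w‖ ^ 2 / σe ^ 2) := by
    rw [hAdef, re_star_dotProduct_smul_vecMulVec_sub_smul_vecMulVec_mulVec]
    ring
  have hq : 0 ≤ ((2:ℝ) ^ R - 1) / lmax :=
    div_nonneg (sub_nonneg.mpr (Real.one_le_rpow (by norm_num) hR.le)) hpos.le
  have hwopt_norm : ∑ i, ‖wopt i‖ ^ 2 = ((2:ℝ) ^ R - 1) / lmax := by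
    simp only [hwopt, Pi.smul_apply, smul_eq_mul, norm_mul, mul_pow, ← Finset.mul_sum,
      hvnorm, mul_one, Complex.norm_real, Real.norm_eq_abs, sq_abs, Real.sq_sqrt hq]
  have hwopt_eigen : A *ᵥ wopt = (lmax : ℂ) • wopt := by
    rw [hwopt, mulVec_smul, hv, smul_comm]
  refine ⟨fun w hw => ?_, ?_, hwopt_norm⟩
  · rw [← hform] at hw
    have := hA.re_star_dotProduct_mulVec_le (fun i => hlmax.2 ⟨i, rfl⟩) w
    rw [div_le_iff₀ hpos]
    linarith
  · rw [← hform, re_star_dotProduct_mulVec_of_mulVec_eq_smul hwopt_eigen, hwopt_norm,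
      mul_div_cancel₀ _ hpos.ne']

/-- Closed-form power-minimization solution for the single-user single-eavesdropper
case: with `A = (1/σₛ²) hₛ hₛ* − (2^R/σₑ²) hₑ hₑ*` Hermitian with positive largest
eigenvalue `λmax`, the infimum of `‖w‖²` over all `w` with
`|hₛ* w|²/σₛ² − 2^R |hₑ* w|²/σₑ² ≥ 2^R − 1` equals `(2^R − 1)/λmax`, attained at
`w_opt = √((2^R−1)/λmax) · v` for any unit-norm eigenvector `v` of `λmax`. -/
theorem stmt7 {n : ℕ} (hs he : Fin n → ℂ) (σs σe R : ℝ)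
    (hσs : 0 < σs) (hσe : 0 < σe) (hR : 0 < R)
    (A : Matrix (Fin n) (Fin n) ℂ)
    (hAdef : A = ((σs ^ 2)⁻¹ : ℝ) • Matrix.vecMulVec hs (star hs)
      - (((2:ℝ) ^ R / σe ^ 2 : ℝ)) • Matrix.vecMulVec he (star he))
    (hA : A.IsHermitian)
    (lmax : ℝ) (hlmax : IsGreatest (Set.range hA.eigenvalues) lmax) (hpos : 0 < lmax)
    (v : Fin n → ℂ) (hv : A.mulVec v = (lmax : ℂ) • v) (hvnorm : ∑ i, ‖v i‖ ^ 2 = 1)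
    (wopt : Fin n → ℂ)
    (hwopt : wopt = (Real.sqrt (((2:ℝ) ^ R - 1) / lmax) : ℂ) • v) :
    (∀ w : Fin n → ℂ,
        (2:ℝ) ^ R - 1 ≤ ‖dotProduct (star hs) w‖ ^ 2 / σs ^ 2
            - (2:ℝ) ^ R * (‖dotProduct (star he) w‖ ^ 2 / σe ^ 2) →
        ((2:ℝ) ^ R - 1) / lmax ≤ ∑ i, ‖w i‖ ^ 2) ∧
    ((2:ℝ) ^ R - 1 ≤ ‖dotProduct (star hs) wopt‖ ^ 2 / σs ^ 2
        - (2:ℝ) ^ R * (‖dotProduct (star he) wopt‖ ^ 2 / σe ^ 2)) ∧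
    (∑ i, ‖wopt i‖ ^ 2 = ((2:ℝ) ^ R - 1) / lmax) :=
  stmt7_general hs he σs σe R hR A hAdef hA lmax hlmax hpos v hv hvnorm wopt hwopt
end

section
/- Let h_s, h_e ∈ ℂⁿ, σ_s, σ_e > 0, R̄ ∈ ℝ, w ∈ ℂⁿ, b ∈ ℝ and u = (u₁,u₂) ∈ ℝ². Put x = Re(w* h_s) and y = Im(w* h_s). If the linearized constraint ‖u‖² + 2·(u₁(x−u₁) + u₂(y−u₂)) ≥ b holds together with (2^R̄ − 1)·σ_s² + (2^R̄·σ_s²/σ_e²)·|w* h_e|² ≤ b, then the original secrecy constraint log₂(1 + |w* h_s|²/σ_s²) − log₂(1 + |w* h_e|²/σ_e²) ≥ R̄ holds. -/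
/-! The linearization is a lower bound of the convex function `‖·‖²`, since
`‖v‖² = ‖u‖² + 2⟪u, v - u⟫ + ‖v - u‖²`; hence the linearized constraint forces
`b ≤ |w* hₛ|²`. The eavesdropper constraint then gives `2^R̄ (1 + |w* hₑ|²/σₑ²) ≤ 1 + |w* hₛ|²/σₛ²`,
which is the secrecy-rate constraint after taking `log₂`. -/

open Real
open scoped InnerProductSpace

theorem norm_sq_add_two_inner_sub_le {E : Type*} [SeminormedAddCommGroup E]
    [InnerProductSpace ℝ E] (u v : E) : ‖u‖ ^ 2 + 2 * ⟪u, v - u⟫_ℝ ≤ ‖v‖ ^ 2 := by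
  have h := norm_add_sq_real u (v - u)
  rw [add_sub_cancel] at h
  nlinarith [sq_nonneg ‖v - u‖]

theorem le_logb_sub_logb_iff {b p q R : ℝ} (hb : 1 < b) (hp : 0 < p) (hq : 0 < q) :
    R ≤ logb b p - logb b q ↔ b ^ R * q ≤ p := by
  rw [← logb_div hp.ne' hq.ne', le_logb_iff_rpow_le hb (div_pos hp hq), le_div_iff₀ hq]

theorem le_logb_one_add_sub_logb_one_add {A B σs σe R : ℝ} (hA : 0 ≤ A) (hB : 0 ≤ B)
    (hσs : 0 < σs) (hσe : 0 < σe)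
    (h : ((2:ℝ) ^ R - 1) * σs ^ 2 + ((2:ℝ) ^ R * σs ^ 2 / σe ^ 2) * B ≤ A) :
    R ≤ logb 2 (1 + A / σs ^ 2) - logb 2 (1 + B / σe ^ 2) := by
  rw [le_logb_sub_logb_iff one_lt_two (by positivity) (by positivity)]
  have hrearrange : (2:ℝ) ^ R * (1 + B / σe ^ 2)
      = 1 + (((2:ℝ) ^ R - 1) * σs ^ 2 + ((2:ℝ) ^ R * σs ^ 2 / σe ^ 2) * B) / σs ^ 2 := by
    field_simp
    ring
  rw [hrearrange]
  gcongr

/-- Conservativeness of the SCA linearization: if the linearized constraint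
`‖u‖² + 2⟨u,(x,y)−u⟩ ≥ b` (with `x = Re(w* hₛ)`, `y = Im(w* hₛ)`) and the
eavesdropper-side constraint `(2^R̄−1)σₛ² + (2^R̄σₛ²/σₑ²)|w* hₑ|² ≤ b` hold, then the
original secrecy-rate constraint holds. -/
theorem stmt12 {n : ℕ} (hs he : Fin n → ℂ) (σs σe : ℝ) (hσs : 0 < σs) (hσe : 0 < σe)
    (R : ℝ) (w : Fin n → ℂ) (b : ℝ) (u1 u2 : ℝ) (x y : ℝ)
    (hx : x = (dotProduct (star w) hs).re)
    (hy : y = (dotProduct (star w) hs).im)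
    (hlin : b ≤ u1 ^ 2 + u2 ^ 2 + 2 * (u1 * (x - u1) + u2 * (y - u2)))
    (heav : ((2:ℝ) ^ R - 1) * σs ^ 2
        + ((2:ℝ) ^ R * σs ^ 2 / σe ^ 2) * ‖dotProduct (star w) he‖ ^ 2 ≤ b) :
    R ≤ Real.logb 2 (1 + ‖dotProduct (star w) hs‖ ^ 2 / σs ^ 2)
        - Real.logb 2 (1 + ‖dotProduct (star w) he‖ ^ 2 / σe ^ 2) := by
  have hsca : b ≤ ‖dotProduct (star w) hs‖ ^ 2 := by
    refine hlin.trans (le_of_eq_of_le ?_ (norm_sq_add_two_inner_sub_le ⟨u1, u2⟩ _))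
    rw [Complex.inner, Complex.sq_norm, Complex.normSq_apply, hx, hy]
    simp only [Complex.sub_re, Complex.sub_im, Complex.mul_re, Complex.conj_re, Complex.conj_im]
    ring
  exact le_logb_one_add_sub_logb_one_add (by positivity) (by positivity) hσs hσe (heav.trans hsca)
end

section
/- Fix positive reals σ̄_s, σ̄_e and R̄ > 0, and vectors h_{s,1},…,h_{s,K} and h_{e,1},…,h_{e,L} in ℂⁿ. Let S be the set of all n×n complex positive semidefinite matrices Q such that (1/σ̄_s²)·Re(h_{s,k}* Q h_{s,k}) − (2^R̄/σ̄_e²)·Re(h_{e,l}* Q h_{e,l}) ≥ 2^R̄ − 1 for all k = 1,…,K and l = 1,…,L. If S is nonempty and the infimum of trace over S is attained, then there exists an optimal solution Q* ∈ S (i.e., tr(Q*) = inf_{Q∈S} tr(Q)) whose rank satisfies rank(Q*) ≤ K and (rank(Q*))² ≤ K·L. -/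
/-!
Let `Q` be an optimal solution of minimal rank `r` and factor `Q = V Vᴴ` with `V` an `n × r`
matrix of full column rank. For Hermitian `Δ` the matrices `V (1 + t Δ) Vᴴ` are positive
semidefinite as long as `1 + t Δ` is, and all constraints and the trace depend affinely on `t`.

If `r > K`, some `w ≠ 0` is orthogonal to every `Vᴴ h_{s,k}`; taking `Δ = w wᴴ` and small
`t < 0` removes power in the direction `V w`, which no legitimate user receives but which costs
trace, so the trace strictly drops: impossible.

If `r² > K L`, the `K L` constraints, real-linear on the `r²`-dimensional space of Hermitian
`r × r` matrices, have a common nonzero zero `Δ`. Moving along `±Δ` stays feasible, so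
optimality makes the trace flat along `Δ`; pushing `t` until `1 + t Δ` becomes singular then
gives an optimal solution of rank `< r`.
-/
open scoped ComplexOrder ComplexStarModule
open Matrix Unitary

namespace Matrix

lemma mulVec_injective_of_rank_eq_card {m n 𝕜 : Type*} [Field 𝕜] [Fintype n] {A : Matrix m n 𝕜}
    (h : A.rank = Fintype.card n) : Function.Injective A.mulVec := by
  have hrn := A.mulVecLin.finrank_range_add_finrank_ker
  rw [← Matrix.rank, h, Module.finrank_fintype_fun_eq_card, add_eq_left,
    Submodule.finrank_eq_zero] at hrn
  exact LinearMap.ker_eq_bot.mp hrn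

lemma exists_ne_zero_forall_dotProduct_eq_zero {ι m 𝕜 : Type*} [Field 𝕜] [Fintype ι]
    [Fintype m] (u : ι → m → 𝕜) (h : Fintype.card ι < Fintype.card m) :
    ∃ w ≠ 0, ∀ i, u i ⬝ᵥ w = 0 := by
  have hker := LinearMap.ker_ne_bot_of_finrank_lt (f := (of u).mulVecLin) (by simpa using h)
  obtain ⟨w, hw, hw0⟩ := Submodule.exists_mem_ne_zero_of_ne_bot hker
  exact ⟨w, hw0, fun i ↦ congrFun (LinearMap.mem_ker.mp hw) i⟩

lemma exists_isHermitian_ne_zero_forall_trace_mul_eq_zero {ι m : Type*} [Fintype ι] [Fintype m]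
    (W : ι → Matrix m m ℂ) (hW : ∀ i, (W i).IsHermitian)
    (h : Fintype.card ι < Fintype.card m ^ 2) :
    ∃ Δ : Matrix m m ℂ, Δ.IsHermitian ∧ Δ ≠ 0 ∧ ∀ i, (Δ * W i).trace = 0 := by
  let φ : Matrix m m ℂ →ₗ[ℂ] ι → ℂ :=
    LinearMap.pi fun i ↦ traceLinearMap m ℂ ℂ ∘ₗ LinearMap.mulRight ℂ (W i)
  have hker := LinearMap.ker_ne_bot_of_finrank_lt (f := φ)
    (by simpa [Module.finrank_matrix, sq] using h)
  obtain ⟨X, hX, hX0⟩ := Submodule.exists_mem_ne_zero_of_ne_bot hker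
  -- The conditions are stable under `X ↦ Xᴴ`, so the Hermitian parts `ℜ X`, `ℑ X` satisfy them.
  have hφX : ∀ i, (X * W i).trace = 0 := fun i ↦ congrFun (LinearMap.mem_ker.mp hX) i
  have hφX' : ∀ i, (star X * W i).trace = 0 := fun i ↦ by
    rw [star_eq_conjTranspose, ← (hW i).eq, ← conjTranspose_mul, trace_conjTranspose,
      trace_mul_comm, hφX, star_zero]
  by_cases hre : (ℜ X : Matrix m m ℂ) = 0
  · refine ⟨ℑ X, (ℑ X).2, fun him ↦ hX0 ?_, fun i ↦ ?_⟩
    · rw [← realPart_add_I_smul_imaginaryPart X, hre, him, smul_zero, add_zero]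
    · rw [imaginaryPart_apply_coe, smul_mul_assoc, smul_mul_assoc, sub_mul, trace_smul,
        trace_smul, trace_sub, hφX, hφX', sub_zero, smul_zero, smul_zero]
  · refine ⟨ℜ X, (ℜ X).2, hre, fun i ↦ ?_⟩
    rw [realPart_apply_coe, smul_mul_assoc, add_mul, trace_smul, trace_add, hφX, hφX', add_zero,
      smul_zero]

section Spectral

variable {n 𝕜 : Type*} [Fintype n] [DecidableEq n] [RCLike 𝕜] {A : Matrix n n 𝕜}

lemma IsHermitian.one_add_smul_eq_conjStarAlgAut (hA : A.IsHermitian) (t : ℝ) :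
    1 + (t : 𝕜) • A = conjStarAlgAut 𝕜 _ hA.eigenvectorUnitary
      (diagonal fun i ↦ ((1 + t * hA.eigenvalues i : ℝ) : 𝕜)) := by
  conv_lhs => rw [hA.spectral_theorem]
  rw [← map_one (conjStarAlgAut 𝕜 (Matrix n n 𝕜) hA.eigenvectorUnitary), ← map_smul, ← map_add]
  congr 1
  ext i j
  by_cases h : i = j <;> simp [h]

lemma IsHermitian.posSemidef_one_add_smul (hA : A.IsHermitian) {t : ℝ}
    (ht : ∀ i, 0 ≤ 1 + t * hA.eigenvalues i) : (1 + (t : 𝕜) • A).PosSemidef := by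
  rw [hA.one_add_smul_eq_conjStarAlgAut, conjStarAlgAut_apply,
    isUnit_coe.posSemidef_star_right_conjugate_iff, posSemidef_diagonal_iff]
  exact fun i ↦ RCLike.ofReal_nonneg.mpr (ht i)

lemma IsHermitian.rank_one_add_smul_lt (hA : A.IsHermitian) {t : ℝ} {i : n}
    (hi : 1 + t * hA.eigenvalues i = 0) : (1 + (t : 𝕜) • A).rank < Fintype.card n := by
  rw [hA.one_add_smul_eq_conjStarAlgAut, conjStarAlgAut_apply]
  refine ((rank_mul_le_left _ _).trans (rank_mul_le_right _ _)).trans_lt ?_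
  rw [rank_diagonal]
  exact Fintype.card_subtype_lt (x := i) (by simp [hi])

lemma IsHermitian.exists_pos_posSemidef_one_add_smul (hA : A.IsHermitian) :
    ∃ ε > 0, ∀ t : ℝ, |t| ≤ ε → (1 + (t : 𝕜) • A).PosSemidef := by
  set s := ∑ i, |hA.eigenvalues i|
  refine ⟨(1 + s)⁻¹, by positivity, fun t ht ↦ hA.posSemidef_one_add_smul fun i ↦ ?_⟩
  have hi : |hA.eigenvalues i| ≤ s :=
    Finset.single_le_sum (f := fun j ↦ |hA.eigenvalues j|) (fun _ _ ↦ abs_nonneg _)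
      (Finset.mem_univ i)
  have : |t * hA.eigenvalues i| ≤ 1 := calc
    |t * hA.eigenvalues i| ≤ (1 + s)⁻¹ * (1 + s) := by
      rw [abs_mul]; gcongr; linarith
    _ = 1 := inv_mul_cancel₀ (by positivity)
  linarith [neg_abs_le (t * hA.eigenvalues i)]

lemma IsHermitian.exists_posSemidef_one_add_smul_rank_lt (hA : A.IsHermitian) (h : A ≠ 0) :
    ∃ t : ℝ, (1 + (t : 𝕜) • A).PosSemidef ∧ (1 + (t : 𝕜) • A).rank < Fintype.card n := by
  obtain ⟨j, hj⟩ : ∃ j, hA.eigenvalues j ≠ 0 := by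
    by_contra! h'
    exact h (hA.eigenvalues_eq_zero_iff.mp (funext h'))
  obtain ⟨i, -, hmax⟩ := Finset.exists_max_image Finset.univ (fun i ↦ |hA.eigenvalues i|)
    ⟨j, Finset.mem_univ j⟩
  have hi : hA.eigenvalues i ≠ 0 := by
    have := hmax j (Finset.mem_univ j)
    contrapose! hj
    simpa [hj] using this
  refine ⟨-(hA.eigenvalues i)⁻¹, hA.posSemidef_one_add_smul fun k ↦ ?_,
    hA.rank_one_add_smul_lt (i := i) (by field_simp; ring)⟩
  have : hA.eigenvalues k / hA.eigenvalues i ≤ 1 := calc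
    _ ≤ |hA.eigenvalues k / hA.eigenvalues i| := le_abs_self _
    _ ≤ 1 := by
      rw [abs_div, div_le_one (abs_pos.mpr hi)]
      exact hmax k (Finset.mem_univ k)
  rw [neg_mul, inv_mul_eq_div]
  linarith

lemma PosSemidef.exists_eq_mul_conjTranspose (hA : A.PosSemidef) :
    ∃ V : Matrix n (Fin A.rank) 𝕜, A = V * Vᴴ := by
  set μ := hA.isHermitian.eigenvalues
  set U : Matrix n n 𝕜 := (hA.isHermitian.eigenvectorUnitary : Matrix n n 𝕜)
  set B : Matrix n n 𝕜 := U * diagonal fun i ↦ ((√(μ i) : ℝ) : 𝕜)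
  have hB : A = B * Bᴴ := by
    have hsq : (diagonal fun i ↦ ((√(μ i) : ℝ) : 𝕜)) * (diagonal fun i ↦ ((√(μ i) : ℝ) : 𝕜))ᴴ
        = diagonal (RCLike.ofReal ∘ μ) := by
      rw [diagonal_conjTranspose, diagonal_mul_diagonal]
      congr 1
      ext i
      simp only [Pi.star_apply, RCLike.star_def, RCLike.conj_ofReal, Function.comp_apply]
      rw [← RCLike.ofReal_mul, Real.mul_self_sqrt (hA.eigenvalues_nonneg i)]
    conv_lhs => rw [hA.isHermitian.spectral_theorem, Unitary.conjStarAlgAut_apply, ← hsq]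
    simp only [B, conjTranspose_mul, star_eq_conjTranspose, Matrix.mul_assoc]
    rfl
  have hzero : ∀ i a, μ a = 0 → B i a = 0 := fun i a ha ↦ by
    simp [B, mul_apply, diagonal_apply, ha]
  -- Drop the columns of `B` at zero eigenvalues: they vanish, and `rank A` columns remain.
  let e : Fin A.rank ≃ {a // μ a ≠ 0} :=
    (Fintype.equivFinOfCardEq hA.isHermitian.rank_eq_card_non_zero_eigs.symm).symm
  refine ⟨B.submatrix id (Subtype.val ∘ e), ?_⟩
  conv_lhs => rw [hB]
  ext i j
  simp only [mul_apply, submatrix_apply, conjTranspose_apply, id, Function.comp_apply]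
  rw [Equiv.sum_comp e (fun a ↦ B i a * star (B j a)),
    ← Fintype.sum_subtype_add_sum_subtype (fun a ↦ μ a ≠ 0) (fun a ↦ B i a * star (B j a)),
    Fintype.sum_eq_zero (fun a : {a // ¬μ a ≠ 0} ↦ B i a * star (B j a))
      fun a ↦ by simp [hzero i a (not_not.mp a.2)], add_zero]

end Spectral

lemma star_dotProduct_mul_mul_conjTranspose_mulVec {m r 𝕜 : Type*} [Fintype m] [Fintype r]
    [RCLike 𝕜] (V : Matrix m r 𝕜) (X : Matrix r r 𝕜) (x : m → 𝕜) :
    star x ⬝ᵥ (V * X * Vᴴ) *ᵥ x = star (Vᴴ *ᵥ x) ⬝ᵥ X *ᵥ (Vᴴ *ᵥ x) := by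
  rw [star_mulVec, conjTranspose_conjTranspose, ← mulVec_mulVec, ← mulVec_mulVec,
    dotProduct_mulVec]

lemma star_dotProduct_vecMulVec_mulVec_s14 {m : Type*} [Fintype m] (u w : m → ℂ) :
    star u ⬝ᵥ vecMulVec w (star w) *ᵥ u = Complex.normSq (star u ⬝ᵥ w) := by
  rw [vecMulVec_mulVec, op_smul_eq_smul, dotProduct_smul, smul_eq_mul, star_dotProduct,
    Complex.star_def, mul_comm, Complex.mul_conj]

end Matrix

namespace SecureMulticast

variable {n r ι κ : Type*} [Fintype n] [Fintype r]
  {a b c : ℝ} {gs : ι → n → ℂ} {ge : κ → n → ℂ}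

def secrecyMargin (a b : ℝ) (g h : n → ℂ) (Q : Matrix n n ℂ) : ℝ :=
  a * (star g ⬝ᵥ Q *ᵥ g).re - b * (star h ⬝ᵥ Q *ᵥ h).re

noncomputable def secrecyWeight (a b : ℝ) (g h : n → ℂ) : Matrix n n ℂ :=
  a • vecMulVec g (star g) - b • vecMulVec h (star h)

def feasibleSet (a b c : ℝ) (gs : ι → n → ℂ) (ge : κ → n → ℂ) : Set (Matrix n n ℂ) :=
  {Q | Q.PosSemidef ∧ ∀ k l, c ≤ secrecyMargin a b (gs k) (ge l) Q}

def IsOptimal (a b c : ℝ) (gs : ι → n → ℂ) (ge : κ → n → ℂ) (Q : Matrix n n ℂ) : Prop :=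
  Q ∈ feasibleSet a b c gs ge ∧ IsMinOn (fun Q ↦ Q.trace.re) (feasibleSet a b c gs ge) Q

lemma isHermitian_secrecyWeight (a b : ℝ) (g h : n → ℂ) : (secrecyWeight a b g h).IsHermitian :=
  ((posSemidef_vecMulVec_self_star g).isHermitian.smul (IsSelfAdjoint.all a)).sub
    ((posSemidef_vecMulVec_self_star h).isHermitian.smul (IsSelfAdjoint.all b))

lemma secrecyMargin_eq_re_trace (a b : ℝ) (g h : n → ℂ) (Q : Matrix n n ℂ) :
    secrecyMargin a b g h Q = (Q * secrecyWeight a b g h).trace.re := by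
  simp [secrecyMargin, secrecyWeight, Matrix.mul_sub, mul_vecMulVec, dotProduct_comm]

lemma secrecyMargin_add_smul (a b : ℝ) (g h : n → ℂ) (X Y : Matrix n n ℂ) (t : ℝ) :
    secrecyMargin a b g h (X + (t : ℂ) • Y) =
      secrecyMargin a b g h X + t * secrecyMargin a b g h Y := by
  simp only [secrecyMargin, add_mulVec, smul_mulVec, dotProduct_add, dotProduct_smul,
    Complex.add_re, smul_eq_mul, Complex.re_ofReal_mul]
  ring

lemma secrecyMargin_mul_mul_conjTranspose (a b : ℝ) (g h : n → ℂ) (V : Matrix n r ℂ)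
    (X : Matrix r r ℂ) :
    secrecyMargin a b g h (V * X * Vᴴ) = secrecyMargin a b (Vᴴ *ᵥ g) (Vᴴ *ᵥ h) X := by
  simp only [secrecyMargin, star_dotProduct_mul_mul_conjTranspose_mulVec]

lemma mul_one_add_smul_mul_conjTranspose_mem_feasibleSet [DecidableEq r] {V : Matrix n r ℂ}
    {Δ : Matrix r r ℂ} {t : ℝ} (hQ : V * Vᴴ ∈ feasibleSet a b c gs ge)
    (hX : (1 + (t : ℂ) • Δ).PosSemidef)
    (hΔ : ∀ k l, 0 ≤ t * secrecyMargin a b (Vᴴ *ᵥ gs k) (Vᴴ *ᵥ ge l) Δ) :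
    V * (1 + (t : ℂ) • Δ) * Vᴴ ∈ feasibleSet a b c gs ge := by
  refine ⟨hX.mul_mul_conjTranspose_same V, fun k l ↦ ?_⟩
  calc c ≤ secrecyMargin a b (gs k) (ge l) (V * (1 : Matrix r r ℂ) * Vᴴ) := by
        rw [Matrix.mul_one]; exact hQ.2 k l
    _ ≤ _ := by
      rw [secrecyMargin_mul_mul_conjTranspose, secrecyMargin_mul_mul_conjTranspose,
        secrecyMargin_add_smul]
      exact le_add_of_nonneg_right (hΔ k l)

lemma re_trace_mul_one_add_smul_mul_conjTranspose [DecidableEq r] (V : Matrix n r ℂ)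
    (Δ : Matrix r r ℂ) (t : ℝ) : (V * (1 + (t : ℂ) • Δ) * Vᴴ).trace.re =
      (V * Vᴴ).trace.re + t * (V * Δ * Vᴴ).trace.re := by
  simp [Matrix.mul_add, Matrix.add_mul, trace_add]

theorem rank_le_card_of_isOptimal [DecidableEq n] [Fintype ι] (hb : 0 ≤ b)
    {Q : Matrix n n ℂ} (hQ : IsOptimal a b c gs ge Q) : Q.rank ≤ Fintype.card ι := by
  obtain ⟨hQ, hmin⟩ := hQ
  obtain ⟨V, hV⟩ := hQ.1.exists_eq_mul_conjTranspose
  have hinj : Function.Injective V.mulVec := mulVec_injective_of_rank_eq_card <| by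
    rw [← rank_self_mul_conjTranspose, ← hV, Fintype.card_fin]
  rw [hV] at hQ hmin
  by_contra! hlt
  obtain ⟨w, hw0, hw⟩ := exists_ne_zero_forall_dotProduct_eq_zero
    (fun k ↦ star (Vᴴ *ᵥ gs k)) (by simpa using hlt)
  set P := vecMulVec w (star w)
  obtain ⟨ε, hε, hεP⟩ :=
    (posSemidef_vecMulVec_self_star w).isHermitian.exists_pos_posSemidef_one_add_smul
  have hmem : V * (1 + ((-ε : ℝ) : ℂ) • P) * Vᴴ ∈ feasibleSet a b c gs ge := by
    refine mul_one_add_smul_mul_conjTranspose_mem_feasibleSet hQ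
      (hεP (-ε) (by rw [abs_neg, abs_of_pos hε])) fun k l ↦ ?_
    simp only [secrecyMargin, P, star_dotProduct_vecMulVec_mulVec_s14, hw k, map_zero,
      Complex.ofReal_zero, Complex.zero_re, mul_zero, zero_sub, Complex.ofReal_re]
    rw [neg_mul_neg]
    exact mul_nonneg hε.le (mul_nonneg hb (Complex.normSq_nonneg _))
  have hτ : 0 < (V * P * Vᴴ).trace.re := by
    rw [Matrix.mul_assoc, vecMulVec_mul, mul_vecMulVec, trace_vecMulVec, ← star_mulVec]
    refine (Complex.pos_iff.mp (dotProduct_self_star_pos_iff.mpr fun h ↦ hw0 ?_)).1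
    exact hinj (h.trans (mulVec_zero V).symm)
  have := isMinOn_iff.mp hmin _ hmem
  rw [re_trace_mul_one_add_smul_mul_conjTranspose] at this
  linarith [mul_pos hε hτ]

theorem rank_sq_le_of_minimalFor [DecidableEq n] [Fintype ι] [Fintype κ] {Q : Matrix n n ℂ}
    (hQ : MinimalFor (IsOptimal a b c gs ge) rank Q) :
    Q.rank ^ 2 ≤ Fintype.card ι * Fintype.card κ := by
  obtain ⟨⟨hQ, hmin⟩, hminrank⟩ := hQ
  obtain ⟨V, hV⟩ := hQ.1.exists_eq_mul_conjTranspose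
  rw [hV] at hQ hmin
  by_contra! hlt
  obtain ⟨Δ, hΔ, hΔ0, hΔW⟩ := exists_isHermitian_ne_zero_forall_trace_mul_eq_zero
    (fun kl : ι × κ ↦ secrecyWeight a b (Vᴴ *ᵥ gs kl.1) (Vᴴ *ᵥ ge kl.2))
    (fun _ ↦ isHermitian_secrecyWeight _ _ _ _) (by simpa using hlt)
  have hmem : ∀ t : ℝ, (1 + (t : ℂ) • Δ).PosSemidef →
      V * (1 + (t : ℂ) • Δ) * Vᴴ ∈ feasibleSet a b c gs ge := fun t ht ↦
    mul_one_add_smul_mul_conjTranspose_mem_feasibleSet hQ ht fun k l ↦ by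
      rw [secrecyMargin_eq_re_trace, hΔW (k, l), Complex.zero_re, mul_zero]
  have hτ : (V * Δ * Vᴴ).trace.re = 0 := by
    obtain ⟨ε, hε, hεΔ⟩ := hΔ.exists_pos_posSemidef_one_add_smul
    have h₁ := isMinOn_iff.mp hmin _ (hmem ε (hεΔ ε (abs_of_pos hε).le))
    have h₂ := isMinOn_iff.mp hmin _ (hmem (-ε) (hεΔ (-ε) (by rw [abs_neg, abs_of_pos hε])))
    rw [re_trace_mul_one_add_smul_mul_conjTranspose] at h₁ h₂
    nlinarith
  obtain ⟨t, ht, hrank⟩ := hΔ.exists_posSemidef_one_add_smul_rank_lt hΔ0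
  have hopt : IsOptimal a b c gs ge (V * (1 + (t : ℂ) • Δ) * Vᴴ) := by
    refine ⟨hmem t ht, isMinOn_iff.mpr fun Q' hQ' ↦ ?_⟩
    rw [re_trace_mul_one_add_smul_mul_conjTranspose, hτ, mul_zero, add_zero]
    exact isMinOn_iff.mp hmin Q' hQ'
  have hlt' : (V * (1 + (t : ℂ) • Δ) * Vᴴ).rank < Q.rank :=
    ((rank_mul_le_left _ _).trans (rank_mul_le_right _ _)).trans_lt (by simpa using hrank)
  exact hlt'.not_ge (hminrank hopt hlt'.le)

end SecureMulticast

open SecureMulticast in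
theorem stmt14_general {n K L : ℕ} (σs σe R : ℝ)
    (hs : Fin K → Fin n → ℂ) (he : Fin L → Fin n → ℂ)
    (S : Set (Matrix (Fin n) (Fin n) ℂ))
    (hS : S = {Q : Matrix (Fin n) (Fin n) ℂ | Q.PosSemidef ∧ ∀ k l,
      (2:ℝ) ^ R - 1 ≤
        (1 / σs ^ 2) * (dotProduct (star (hs k)) (Q.mulVec (hs k))).re
        - ((2:ℝ) ^ R / σe ^ 2) * (dotProduct (star (he l)) (Q.mulVec (he l))).re})
    (hatt : ∃ Q0 ∈ S, ∀ Q ∈ S, Q0.trace.re ≤ Q.trace.re) :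
    ∃ Qstar ∈ S, (∀ Q ∈ S, Qstar.trace.re ≤ Q.trace.re) ∧
      Qstar.rank ≤ K ∧ Qstar.rank ^ 2 ≤ K * L := by
  replace hS : S = feasibleSet (1 / σs ^ 2) (2 ^ R / σe ^ 2) (2 ^ R - 1) hs he := hS
  subst hS
  obtain ⟨Q₀, hQ₀, hQ₀min⟩ := hatt
  obtain ⟨Q, hQ⟩ := exists_minimalFor_of_wellFoundedLT (IsOptimal _ _ _ hs he) rank
    ⟨Q₀, hQ₀, isMinOn_iff.mpr hQ₀min⟩
  refine ⟨Q, hQ.1.1, isMinOn_iff.mp hQ.1.2, ?_, ?_⟩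
  · simpa using rank_le_card_of_isOptimal (by positivity) hQ.1
  · simpa using rank_sq_le_of_minimalFor hQ

/-- Rank bound for the SDP relaxation of the secure multicast power-minimization:
if the trace minimum over the feasible set `S` is attained, then there is an optimal
`Q* ∈ S` with `rank(Q*) ≤ K` and `rank(Q*)² ≤ K·L`, i.e. `rank(Q*) ≤ min(K, √(KL))`. -/
theorem stmt14 {n K L : ℕ} (σs σe R : ℝ) (hσs : 0 < σs) (hσe : 0 < σe) (hR : 0 < R)
    (hs : Fin K → Fin n → ℂ) (he : Fin L → Fin n → ℂ)
    (S : Set (Matrix (Fin n) (Fin n) ℂ))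
    (hS : S = {Q : Matrix (Fin n) (Fin n) ℂ | Q.PosSemidef ∧ ∀ k l,
      (2:ℝ) ^ R - 1 ≤
        (1 / σs ^ 2) * (dotProduct (star (hs k)) (Q.mulVec (hs k))).re
        - ((2:ℝ) ^ R / σe ^ 2) * (dotProduct (star (he l)) (Q.mulVec (he l))).re})
    (hne : S.Nonempty)
    (hatt : ∃ Q0 ∈ S, ∀ Q ∈ S, Q0.trace.re ≤ Q.trace.re) :
    ∃ Qstar ∈ S, (∀ Q ∈ S, Qstar.trace.re ≤ Q.trace.re) ∧
      Qstar.rank ≤ K ∧ Qstar.rank ^ 2 ≤ K * L :=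
  stmt14_general σs σe R hs he S hS hatt
end
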